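/- Paraconsistency and nonmonotonicity of minimally inconsistent entailment in the three-valued logic P: for distinct atoms p and q and Γ = {p, ¬(p∧¬q)}, it holds that (i) Γ ⊭_P q (q is not a P-consequence of Γ), (ii) Γ ⊨ᵐ_P q (q follows from Γ under minimally inconsistent entailment), and (iii) Γ ∪ {¬q} ⊭ᵐ_P q; in particular, ⊨ᵐ_P is nonmonotonic. -/

import Mathlib

/-- Truth values of the three-valued logic P: f < b < t. -/
inductive V3 : Type
  | f | b | t
deriving DecidableEq, Repr

namespace V3

/-- Negation: t, b, f ↦ f, b, t. -/
def negv : V3 → V3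
  | .f => .t
  | .b => .b
  | .t => .f

/-- Conjunction: minimum with respect to f < b < t. -/
def conjv : V3 → V3 → V3
  | .f, _ => .f
  | _, .f => .f
  | .b, _ => .b
  | _, .b => .b
  | .t, .t => .t

/-- Implication: `x ⊃ y` is `y` if `x` is designated (b or t), and `t` otherwise. -/
def impv : V3 → V3 → V3
  | .f, _ => .t
  | _, y => y

end V3

/-- Formulas of the three-valued logic P, with atoms indexed by ℕ, the constant
F, negation, conjunction, and implication. -/
inductive PForm : Type
  | atom : ℕ → PForm
  | fls : PForm
  | neg : PForm → PForm
  | conj : PForm → PForm → PForm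
  | imp : PForm → PForm → PForm
deriving DecidableEq

namespace PForm

/-- The valuation of P extending an interpretation `I : ℕ → V3`. -/
def val (I : ℕ → V3) : PForm → V3
  | atom p => I p
  | fls => .f
  | neg φ => (φ.val I).negv
  | conj φ ψ => (φ.val I).conjv (ψ.val I)
  | imp φ ψ => (φ.val I).impv (ψ.val I)

/-- `I` is a P-model of `φ`: `v_I(φ)` is designated, i.e. b or t. -/
def IsModel (I : ℕ → V3) (φ : PForm) : Prop := φ.val I = .b ∨ φ.val I = .t

/-- `I` is a P-model of the theory `Γ`. -/
def IsModelSet (I : ℕ → V3) (Γ : Set PForm) : Prop := ∀ φ ∈ Γ, IsModel I φ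

end PForm

/-- `Γ ⊨_P Δ`: every P-model of `Γ` is a P-model of some member of `Δ`. -/
def PEntails (Γ Δ : Set PForm) : Prop :=
  ∀ I, PForm.IsModelSet I Γ → ∃ δ ∈ Δ, PForm.IsModel I δ

/-- `I` is a minimally inconsistent P-model of `Γ`. -/
def PMinIncModel (I : ℕ → V3) (Γ : Set PForm) : Prop :=
  PForm.IsModelSet I Γ ∧
    ¬ ∃ J : ℕ → V3, PForm.IsModelSet J Γ ∧ {p : ℕ | J p = .b} ⊂ {p : ℕ | I p = .b}

/-- `Γ ⊨ᵐ_P Δ`: every minimally inconsistent P-model of `Γ` is a P-model of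
some member of `Δ`. -/
def PMinEntails (Γ Δ : Set PForm) : Prop :=
  ∀ I, PMinIncModel I Γ → ∃ δ ∈ Δ, PForm.IsModel I δ

/-!
The theory `{p, ¬(p ∧ ¬q)}` has the classical model making every atom true, so its minimally
inconsistent models are classical; a classical model of it makes `p` true and hence `q` true.
The interpretation in which `p` is the only glut (atom valued `b`) and every other atom is
false models the theory, even together with `¬q`, without modelling `q`. With `¬q` added there
is no classical model left, so that interpretation, having a single glut, is minimally
inconsistent.
-/

theorem V3.eq_t_of_ne_f_of_ne_b {x : V3} (hf : x ≠ .f) (hb : x ≠ .b) : x = .t := by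
  cases x <;> simp_all

theorem V3.eq_f_of_ne_t_of_ne_b {x : V3} (ht : x ≠ .t) (hb : x ≠ .b) : x = .f := by
  cases x <;> simp_all

namespace PForm

variable {I : ℕ → V3}

theorem isModel_atom {p : ℕ} : IsModel I (atom p) ↔ I p ≠ .f := by
  cases h : I p <;> simp [IsModel, val, h]

theorem isModel_neg_atom {p : ℕ} : IsModel I (neg (atom p)) ↔ I p ≠ .t := by
  cases h : I p <;> simp [IsModel, val, V3.negv, h]

theorem isModel_neg_conj_neg {φ ψ : PForm} :
    IsModel I (neg (conj φ (neg ψ))) ↔ ¬ (φ.val I = .t ∧ ψ.val I = .f) := by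
  simp only [IsModel, val]
  cases φ.val I <;> cases ψ.val I <;> decide

theorem isModelSet_insert {φ : PForm} {Γ : Set PForm} :
    IsModelSet I (insert φ Γ) ↔ IsModel I φ ∧ IsModelSet I Γ :=
  Set.forall_mem_insert

theorem isModelSet_singleton {φ : PForm} : IsModelSet I {φ} ↔ IsModel I φ :=
  forall_eq

theorem isModelSet_union {Γ Δ : Set PForm} :
    IsModelSet I (Γ ∪ Δ) ↔ IsModelSet I Γ ∧ IsModelSet I Δ :=
  forall₂_or_left

end PForm

open PForm

def IsClassical (I : ℕ → V3) : Prop := ∀ x, I x ≠ .b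

theorem PMinIncModel.isClassical {I J : ℕ → V3} {Γ : Set PForm} (hI : PMinIncModel I Γ)
    (hJ : IsModelSet J Γ) (hJc : IsClassical J) : IsClassical I := by
  intro x hx
  refine hI.2 ⟨J, hJ, ?_⟩
  rw [Set.eq_empty_of_forall_notMem hJc]
  exact Set.empty_ssubset.mpr ⟨x, hx⟩

theorem pMinIncModel_of_glut_subset_singleton {I : ℕ → V3} {Γ : Set PForm} {p : ℕ}
    (hI : IsModelSet I Γ) (hglut : {x | I x = .b} ⊆ {p})
    (hΓ : ∀ J, IsModelSet J Γ → ¬ IsClassical J) : PMinIncModel I Γ := by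
  refine ⟨hI, fun ⟨J, hJ, hJI⟩ => hΓ J hJ fun x hx => ?_⟩
  have hJ_empty : {x | J x = .b} = ∅ :=
    Set.ssubset_singleton_iff.mp (hJI.trans_subset hglut)
  exact hJ_empty.subset hx

def glutTheory (p q : ℕ) : Set PForm := {atom p, neg (conj (atom p) (neg (atom q)))}

theorem isModelSet_glutTheory {I : ℕ → V3} {p q : ℕ} :
    IsModelSet I (glutTheory p q) ↔ I p ≠ .f ∧ ¬ (I p = .t ∧ I q = .f) := by
  simp only [glutTheory, isModelSet_insert, isModelSet_singleton, isModel_atom,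
    isModel_neg_conj_neg, val]

def glutAt (p : ℕ) : ℕ → V3 := Function.update (fun _ => .f) p .b

theorem glutAt_of_ne {p x : ℕ} (h : x ≠ p) : glutAt p x = .f :=
  Function.update_of_ne h _ _

theorem isModelSet_glutAt {p q : ℕ} (hpq : p ≠ q) :
    IsModelSet (glutAt p) (glutTheory p q ∪ {neg (atom q)}) := by
  rw [isModelSet_union, isModelSet_glutTheory, isModelSet_singleton, isModel_neg_atom]
  simp [glutAt, hpq.symm]

theorem not_isClassical_of_isModelSet_glutTheory_neg {J : ℕ → V3} {p q : ℕ}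
    (hJ : IsModelSet J (glutTheory p q ∪ {neg (atom q)})) : ¬ IsClassical J := by
  rw [isModelSet_union, isModelSet_glutTheory, isModelSet_singleton, isModel_neg_atom] at hJ
  intro hJc
  obtain ⟨⟨hp, hpq⟩, hq⟩ := hJ
  exact hpq ⟨V3.eq_t_of_ne_f_of_ne_b hp (hJc p), V3.eq_f_of_ne_t_of_ne_b hq (hJc q)⟩

theorem pMinEntails_glutTheory (p q : ℕ) : PMinEntails (glutTheory p q) {atom q} := by
  intro I hI
  have hc : IsClassical I :=
    hI.isClassical (J := fun _ => .t) (isModelSet_glutTheory.mpr (by simp)) fun _ => by simp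
  obtain ⟨hp, hpq⟩ := isModelSet_glutTheory.mp hI.1
  exact ⟨atom q, rfl, isModel_atom.mpr fun hq => hpq ⟨V3.eq_t_of_ne_f_of_ne_b hp (hc p), hq⟩⟩

/-- Paraconsistency and nonmonotonicity of minimally inconsistent entailment
in the three-valued logic P: for distinct atoms `p`, `q` and
`Γ = {p, ¬(p ∧ ¬q)}`, (i) `Γ ⊭_P q`, (ii) `Γ ⊨ᵐ_P q`, and
(iii) `Γ ∪ {¬q} ⊭ᵐ_P q`. -/
theorem P_paraconsistent_nonmonotonic (p q : ℕ) (hpq : p ≠ q) :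
    ¬ PEntails {PForm.atom p, PForm.neg (PForm.conj (PForm.atom p) (PForm.neg (PForm.atom q)))}
        {PForm.atom q} ∧
    PMinEntails {PForm.atom p, PForm.neg (PForm.conj (PForm.atom p) (PForm.neg (PForm.atom q)))}
        {PForm.atom q} ∧
    ¬ PMinEntails ({PForm.atom p, PForm.neg (PForm.conj (PForm.atom p) (PForm.neg (PForm.atom q)))}
          ∪ {PForm.neg (PForm.atom q)})
        {PForm.atom q} := by
  have hmodel := isModelSet_glutAt hpq
  have hq : ¬ IsModel (glutAt p) (atom q) := by
    simp [isModel_atom, glutAt_of_ne hpq.symm]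
  have hmin : PMinIncModel (glutAt p) (glutTheory p q ∪ {neg (atom q)}) :=
    pMinIncModel_of_glut_subset_singleton (p := p) hmodel
      (fun x hx => by_contra fun hxp => by simp [glutAt_of_ne hxp] at hx)
      fun _ => not_isClassical_of_isModelSet_glutTheory_neg
  refine ⟨fun h => ?_, pMinEntails_glutTheory p q, fun h => ?_⟩
  · obtain ⟨_, rfl, hm⟩ := h _ (isModelSet_union.mp hmodel).1
    exact hq hm
  · obtain ⟨_, rfl, hm⟩ := h _ hmin
    exact hq hm
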